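/- arXiv:1211.3049 — 5 statements merged into one kernel-verified Lean document; each statement's English description precedes it below -/
import Mathlib

section
/- If u is a central word of the form u = p01q = q10p with p and q palindromes, then p and q are themselves central words, and the pair (p,q) is uniquely determined by u. -/
/-!
Centrality: `0u1 = 0q1·0p1` and `1u0 = 1p0·1q0`, and balancedness passes to factors.

For uniqueness, two factorizations `u = p01q = q10p = p'01q' = q'10p'` with `|p| < |p'|` make
`u` periodic with periods `|p| + 2` (border `q`) and `|q'| + 2` (border `p'`), whose sum is at
most `|u| + 1`. By the Fine–Wilf theorem `u` has period `g = gcd (|p| + 2) (|q'| + 2)`, and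
`|p| ≡ -2 ≡ |q'| (mod g)`; but `u` has the letter `0` at position `|p|` and `1` at `|q'|`.
-/

/-- A finite binary word is balanced if the numbers of occurrences of `true`
in any two factors of equal length differ by at most 1. -/
def BalancedWord (w : List Bool) : Prop :=
  ∀ u v : List Bool, u <:+: w → v <:+: w → u.length = v.length →
    u.count true ≤ v.count true + 1

/-- A word `u` is central if it is a palindrome and both `0u1` and `1u0` are balanced. -/
def Central (u : List Bool) : Prop :=
  u.reverse = u ∧ BalancedWord (false :: (u ++ [true])) ∧ BalancedWord (true :: (u ++ [false]))

lemma BalancedWord.of_infix {w v : List Bool} (hw : BalancedWord w) (hv : v <:+: w) :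
    BalancedWord v :=
  fun a b ha hb hl => hw a b (ha.trans hv) (hb.trans hv) hl

namespace List

variable {α : Type*}

lemma hasPeriod_length_of_eq_append_of_prefix {w x s : List α} (hw : w = x ++ s)
    (hs : s <+: w) : HasPeriod w x.length := by
  subst hw
  rw [HasPeriod, take_left]
  exact prefix_append_right_inj x |>.mpr hs

lemma HasPeriod.getElem?_eq_of_modEq {w : List α} {g i j : ℕ} (h : HasPeriod w g)
    (hij : i ≡ j [MOD g]) (hi : i < w.length) (hj : j < w.length) : w[i]? = w[j]? := by
  rw [hasPeriod_iff_forall_getElem?_mod] at h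
  rw [h i hi, h j hj, hij]

end List

open List in
lemma length_le_of_p01q_eq_q10p {u p q p' q' : List Bool}
    (h1 : u = p ++ [false, true] ++ q) (h2 : u = q ++ [true, false] ++ p)
    (h1' : u = p' ++ [false, true] ++ q') (h2' : u = q' ++ [true, false] ++ p') :
    p'.length ≤ p.length := by
  by_contra! hlt
  have hlen' : u.length = p'.length + q'.length + 2 := by simp [h1']; omega
  have hperA : HasPeriod u (p.length + 2) := by
    simpa using hasPeriod_length_of_eq_append_of_prefix h1
      ⟨[true, false] ++ p, by rw [h2, append_assoc]⟩
  have hperB : HasPeriod u (q'.length + 2) := by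
    simpa using hasPeriod_length_of_eq_append_of_prefix h2'
      ⟨[false, true] ++ q', by rw [h1', append_assoc]⟩
  set g := (p.length + 2).gcd (q'.length + 2)
  have hg : 0 < g := Nat.gcd_pos_of_pos_left _ (by omega)
  have hper : HasPeriod u g := hperA.gcd hperB (by omega)
  have hmod : p.length ≡ q'.length [MOD g] :=
    Nat.ModEq.add_right_cancel' 2 <| (Nat.modEq_zero_iff_dvd.mpr (Nat.gcd_dvd_left _ _)).trans
      (Nat.modEq_zero_iff_dvd.mpr (Nat.gcd_dvd_right _ _)).symm
  have hzero : u[p.length]? = some false := by simp [h1]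
  have hone : u[q'.length]? = some true := by simp [h2']
  have hsame := hper.getElem?_eq_of_modEq hmod (by omega) (by omega)
  simp [hzero, hone] at hsame

/-- If a central word has the form `u = p01q = q10p` with `p`, `q` palindromes,
then `p` and `q` are central and uniquely determined by `u`. -/
theorem central_p01q (u p q : List Bool) (hu : Central u)
    (hp : p.reverse = p) (hq : q.reverse = q)
    (h1 : u = p ++ [false, true] ++ q) (h2 : u = q ++ [true, false] ++ p) :
    Central p ∧ Central q ∧
      ∀ p' q' : List Bool, p'.reverse = p' → q'.reverse = q' →
        u = p' ++ [false, true] ++ q' → u = q' ++ [true, false] ++ p' →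
        p' = p ∧ q' = q := by
  obtain ⟨-, hu01, hu10⟩ := hu
  have e01 : false :: (u ++ [true]) = false :: (q ++ [true]) ++ false :: (p ++ [true]) := by
    simp [h2]
  have e10 : true :: (u ++ [false]) = true :: (p ++ [false]) ++ true :: (q ++ [false]) := by
    simp [h1]
  refine ⟨⟨hp, hu01.of_infix ?_, hu10.of_infix ?_⟩, ⟨hq, hu01.of_infix ?_, hu10.of_infix ?_⟩, ?_⟩
  · rw [e01]; exact (List.suffix_append _ _).isInfix
  · rw [e10]; exact (List.prefix_append _ _).isInfix
  · rw [e01]; exact (List.prefix_append _ _).isInfix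
  · rw [e10]; exact (List.suffix_append _ _).isInfix
  · intro p' q' _ _ h1' h2'
    have hlen : p'.length = p.length :=
      le_antisymm (length_le_of_p01q_eq_q10p h1 h2 h1' h2')
        (length_le_of_p01q_eq_q10p h1' h2' h1 h2)
    rw [List.append_assoc] at h1 h1'
    obtain ⟨hpp, hqq⟩ := List.append_inj (h1'.symm.trans h1) hlen
    exact ⟨hpp, List.append_cancel_left hqq⟩
end

section
/- Let v be a proper palindromic prefix of a central word u such that v is not a power of a single letter. Then either v01 or v10 is a prefix of u. -/
namespace List

lemma eq_replicate_of_cons_eq_append_singleton {α : Type*} (a : α) :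
    ∀ v : List α, a :: v = v ++ [a] → v = replicate v.length a
  | [], _ => rfl
  | x :: t, h => by
    obtain ⟨rfl, ht⟩ := cons_eq_cons.mp h
    rw [length_cons, replicate_succ, ← eq_replicate_of_cons_eq_append_singleton a t ht]

lemma exists_eq_replicate_append_cons_not (c : Bool) :
    ∀ v : List Bool, (¬ ∃ n, v = replicate n c) → ∃ k q, v = replicate k c ++ (!c) :: q
  | [], h => absurd ⟨0, rfl⟩ h
  | x :: t, h => by
    by_cases hx : x = c
    · subst hx
      have ht : ¬ ∃ n, t = replicate n x := fun ⟨n, hn⟩ => h ⟨n + 1, by simp [hn, replicate_succ]⟩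
      obtain ⟨k, q, rfl⟩ := exists_eq_replicate_append_cons_not x t ht
      exact ⟨k + 1, q, by simp [replicate_succ]⟩
    · exact ⟨0, t, by simp [Bool.eq_not_of_ne hx]⟩

end List

lemma BalancedWord.count_le {w u v : List Bool} (hw : BalancedWord w) (hu : u <:+: w)
    (hv : v <:+: w) (hlen : u.length = v.length) (c : Bool) : u.count c ≤ v.count c + 1 := by
  cases c
  · have hu' := List.count_true_add_count_false u
    have hv' := List.count_true_add_count_false v
    have := hw v u hv hu hlen.symm
    omega
  · exact hw u v hu hv hlen

lemma Central.balancedWord {u : List Bool} (hu : Central u) (c : Bool) :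
    BalancedWord ((!c) :: (u ++ [c])) := by
  cases c
  exacts [hu.2.2, hu.2.1]

lemma BalancedWord.eq_replicate_of_palindrome_append_pair {c : Bool} {v rest : List Bool}
    (hbal : BalancedWord ((!c) :: (v ++ c :: c :: rest ++ [c]))) (hpal : v.reverse = v) :
    ∃ n, v = List.replicate n c := by
  by_contra hnp
  obtain ⟨k, q, hv⟩ := List.exists_eq_replicate_append_cons_not c v hnp
  have hv_rev : v = q.reverse ++ (!c) :: List.replicate k c := by
    rw [← hpal, hv]
    simp
  have h_sep : (!c) :: (List.replicate k c ++ [!c]) <:+: (!c) :: (v ++ c :: c :: rest ++ [c]) :=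
    ⟨[], q ++ c :: c :: rest ++ [c], by rw [hv]; simp⟩
  have h_run : List.replicate (k + 2) c <:+: (!c) :: (v ++ c :: c :: rest ++ [c]) :=
    ⟨(!c) :: q.reverse ++ [!c], rest ++ [c], by rw [hv_rev]; simp [List.replicate_succ']⟩
  have := hbal.count_le h_run h_sep (by simp) c
  simp [List.count_append] at this

/-- If `v` is a proper palindromic prefix of a central word `u` and `v` is not a power
of a single letter, then `v01` or `v10` is a prefix of `u`. -/
theorem central_prefix_extension (u v : List Bool) (hu : Central u)
    (hpref : v <+: u) (hproper : v.length < u.length) (hpal : v.reverse = v)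
    (hnp : ¬ ∃ (a : Bool) (n : ℕ), v = List.replicate n a) :
    (v ++ [false, true]) <+: u ∨ (v ++ [true, false]) <+: u := by
  obtain ⟨t, rfl⟩ := hpref
  rcases t with _ | ⟨a, _ | ⟨b, rest⟩⟩
  · simp at hproper
  · have h := hu.1
    rw [List.reverse_append, hpal, List.reverse_singleton, List.singleton_append] at h
    exact absurd ⟨a, _, List.eq_replicate_of_cons_eq_append_singleton a v h⟩ hnp
  · by_cases hab : a = b
    · subst hab
      obtain ⟨n, hn⟩ := (hu.balancedWord a).eq_replicate_of_palindrome_append_pair hpal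
      exact absurd ⟨a, n, hn⟩ hnp
    · cases a <;> cases b <;> simp at hab
      · exact Or.inl ⟨rest, by simp⟩
      · exact Or.inr ⟨rest, by simp⟩
end

section
/- A word v over {0,1} of length at least 2 is a lower Christoffel word if and only if v = 0u1 for some central word u; and v is an upper Christoffel word if and only if v = 1u0 for some central word u. Consequently, v is a lower Christoffel word of length at least 2 if and only if its reversal is an upper Christoffel word. -/
/-- The lower Christoffel word of slope `p/q`: the word of length `q` whose `n`-th letter
is `0` if `{n·p/q} < 1 - p/q` and `1` otherwise. -/
def lowerChrWord (p q : ℕ) : List Bool :=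
  (List.range q).map (fun n => decide ((1 - (p : ℚ) / q) ≤ Int.fract ((n * p : ℕ) / (q : ℚ))))

/-- The upper Christoffel word of slope `p/q`: the word of length `q` whose `n`-th letter
is `0` if `0 < {n·p/q} ≤ 1 - p/q` and `1` otherwise. -/
def upperChrWord (p q : ℕ) : List Bool :=
  (List.range q).map (fun n =>
    decide (Int.fract ((n * p : ℕ) / (q : ℚ)) = 0 ∨
      (1 - (p : ℚ) / q) < Int.fract ((n * p : ℕ) / (q : ℚ))))

/-- `v` is a lower Christoffel word (of some rational slope `p/q` in lowest terms). -/
def IsLowerChristoffelMech (v : List Bool) : Prop :=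
  ∃ p q : ℕ, 0 < q ∧ p ≤ q ∧ Nat.Coprime p q ∧ v = lowerChrWord p q

/-- `v` is an upper Christoffel word (of some rational slope `p/q` in lowest terms). -/
def IsUpperChristoffelMech (v : List Bool) : Prop :=
  ∃ p q : ℕ, 0 < q ∧ p ≤ q ∧ Nat.Coprime p q ∧ v = upperChrWord p q

/-!
Let `f n` be the number of `1`s in the prefix of length `n` of a binary word of length `q`.
The lower Christoffel word of slope `p/q` is the word with `f n = ⌊n p / q⌋`. Since the floor is
additive up to an error in `{0, 1}`, every factor of length `n` has `f n` or `f n + 1` ones, so the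
word is balanced. Its letter at `n` is the letter of the upper word at `q - 1 - n`, and for coprime
`p, q` the two words differ only at their two ends; hence they are `0u1` and `1u0` with `u` a
palindrome.

Conversely, let `u` be a palindrome with `w = 0u1` balanced. The palindrome gives the suffix of
length `n` exactly one more `1` than the prefix, so by balance `f` is additive up to an error in
`{0, 1}`. Then each of the `q` cyclic factors of length `n` has `f n` or `f n + 1` ones, both
occurring, while together they count every letter `n` times: `q f n < n p < q f n + q` with
`p = f q`. So `f n = ⌊n p / q⌋`, and `q ∤ n p` for `0 < n < q` forces `gcd p q = 1`.
-/

open Finset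

theorem List.take_drop_infix {α : Type*} (w : List α) (i m : ℕ) : (w.drop i).take m <:+: w :=
  (List.take_prefix _ _).isInfix.trans (List.drop_suffix _ _).isInfix

theorem List.IsInfix.exists_eq_take_drop {α : Type*} {u w : List α} (h : u <:+: w) :
    ∃ i, i + u.length ≤ w.length ∧ u = (w.drop i).take u.length := by
  obtain ⟨s, t, rfl⟩ := h
  exact ⟨s.length, by simp, by simp⟩

theorem List.count_take_add {α : Type*} [BEq α] (w : List α) (a : α) (i m : ℕ) :
    (w.take (i + m)).count a = (w.take i).count a + ((w.drop i).take m).count a := by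
  rw [List.take_add, List.count_append]

theorem List.eq_of_count_true_take_eq {l₁ l₂ : List Bool} (hlen : l₁.length = l₂.length)
    (h : ∀ n ≤ l₁.length, (l₁.take n).count true = (l₂.take n).count true) : l₁ = l₂ := by
  induction l₁ generalizing l₂ with
  | nil => exact (List.length_eq_zero_iff.1 hlen.symm).symm
  | cons a t ih =>
    obtain _ | ⟨b, s⟩ := l₂
    · simp at hlen
    have hab : a = b := by
      have := h 1 (by simp)
      cases a <;> cases b <;> simp_all
    subst hab
    refine congrArg _ (ih (by simpa using hlen) fun n hn => ?_)
    simpa [List.count_cons] using h (n + 1) (by simpa using hn)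

theorem balancedWord_iff_windows {w : List Bool} :
    BalancedWord w ↔ ∀ i j m, i + m ≤ w.length → j + m ≤ w.length →
      ((w.drop i).take m).count true ≤ ((w.drop j).take m).count true + 1 := by
  constructor
  · intro hw i j m hi hj
    exact hw _ _ (List.take_drop_infix w i m) (List.take_drop_infix w j m) (by simp only [List.length_take, List.length_drop]; omega)
  · intro hw u v hu hv hlen
    obtain ⟨i, hi, hu⟩ := hu.exists_eq_take_drop
    obtain ⟨j, hj, hv⟩ := hv.exists_eq_take_drop
    rw [hu, hv, ← hlen]
    exact hw i j _ hi (hlen ▸ hj)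

theorem BalancedWord.reverse {w : List Bool} (hw : BalancedWord w) : BalancedWord w.reverse := by
  intro x y hx hy hlen
  simpa using hw x.reverse y.reverse (List.reverse_infix.1 (by simpa using hx))
    (List.reverse_infix.1 (by simpa using hy)) (by simpa using hlen)

def AlmostAdditiveOn (f : ℕ → ℕ) (N : ℕ) : Prop :=
  ∀ a b, a + b ≤ N → f a + f b ≤ f (a + b) ∧ f (a + b) ≤ f a + f b + 1

theorem BalancedWord.of_almostAdditiveOn {w : List Bool}
    (hw : AlmostAdditiveOn (fun k => (w.take k).count true) w.length) : BalancedWord w := by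
  refine balancedWord_iff_windows.2 fun i j m hi hj => ?_
  have hi' := hw i m hi
  have hj' := hw j m hj
  simp only [List.count_take_add] at hi' hj'
  omega

theorem BalancedWord.almostAdditiveOn {w : List Bool} (hw : BalancedWord w)
    (hsym : ∀ a b, 0 < a → 0 < b → a + b = w.length →
      (w.take a).count true + (w.take b).count true + 1 = w.count true) :
    AlmostAdditiveOn (fun k => (w.take k).count true) w.length := by
  intro a b hab
  have hwin := balancedWord_iff_windows.1 hw
  simp only [List.count_take_add]
  have hupper := hwin a 0 b hab (by omega)
  rcases Nat.eq_zero_or_pos a with rfl | ha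
  · simp
  -- compare with the suffix of length `b`, which has one more `true` than the prefix
  have hsuffix := hwin (w.length - b) a b (by omega) hab
  have htotal := List.count_take_add w true (w.length - b) b
  rw [Nat.sub_add_cancel (by omega), List.take_length] at htotal
  rcases Nat.eq_zero_or_pos b with rfl | hb
  · simp
  have := hsym (w.length - b) b (by omega) hb (by omega)
  simp only [List.drop_zero] at hupper ⊢
  omega

theorem Finset.sum_range_add_eq_of_forall_add_eq (G : ℕ → ℕ) {q n c : ℕ}
    (hG : ∀ k < n, G (q + k) = G k + c) :
    ∑ i ∈ range q, G (i + n) = ∑ i ∈ range q, G i + n * c := by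
  have h₁ := Finset.sum_range_add G n q
  have h₂ := Finset.sum_range_add G q n
  have h₃ : ∑ k ∈ range n, G (q + k) = ∑ k ∈ range n, G k + n * c := by
    rw [Finset.sum_congr rfl fun k hk => hG k (Finset.mem_range.1 hk), Finset.sum_add_distrib,
      Finset.sum_const, Finset.card_range, smul_eq_mul]
  simp only [add_comm _ n] at h₁ ⊢
  rw [add_comm n q] at h₁
  omega

namespace AlmostAdditiveOn

variable {f : ℕ → ℕ} {q : ℕ}

theorem map_zero (hf : AlmostAdditiveOn f q) : f 0 = 0 := by
  have := (hf 0 0 (Nat.zero_le _)).1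
  rw [Nat.add_zero] at this
  omega

theorem mul_lt_and_lt_mul_add (hf : AlmostAdditiveOn f q)
    (hsym : ∀ a b, 0 < a → 0 < b → a + b = q → f a + f b + 1 = f q)
    {n : ℕ} (hn : 0 < n) (hnq : n < q) : q * f n < n * f q ∧ n * f q < q * f n + q := by
  have hf0 := hf.map_zero
  -- if `f` counts the `1`s in the prefixes of `w`, then `G` does so for `w ++ w`
  set G : ℕ → ℕ := fun k => if k ≤ q then f k else f q + f (k - q) with hG
  have hwindow : ∀ i < q, G i + f n ≤ G (i + n) ∧ G (i + n) ≤ G i + f n + 1 := by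
    intro i hi
    simp only [hG, if_pos hi.le]
    split_ifs with hin
    · exact hf i n hin
    · have h₁ := hsym i (q - i) (by omega) (by omega) (by omega)
      have h₂ := hf (i + n - q) (q - i) (by omega)
      rw [show i + n - q + (q - i) = n by omega] at h₂
      omega
  have hper : ∀ k < n, G (q + k) = G k + f q := by
    intro k hk
    rcases Nat.eq_zero_or_pos k with rfl | hk0
    · simp [hG, hf0]
    · simp only [hG, if_neg (show ¬ q + k ≤ q by omega), if_pos (show k ≤ q by omega),
        Nat.add_sub_cancel_left, add_comm]
  have hsum := Finset.sum_range_add_eq_of_forall_add_eq G hper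
  have hlo : ∑ i ∈ range q, (G i + f n) < ∑ i ∈ range q, G (i + n) := by
    refine Finset.sum_lt_sum (fun i hi => (hwindow i (Finset.mem_range.1 hi)).1)
      ⟨q - n, Finset.mem_range.2 (by omega), ?_⟩
    have := hsym (q - n) n (by omega) hn (by omega)
    simp only [hG, if_pos (show q - n ≤ q by omega), Nat.sub_add_cancel hnq.le, le_refl, if_true]
    omega
  have hhi : ∑ i ∈ range q, G (i + n) < ∑ i ∈ range q, (G i + f n + 1) := by
    refine Finset.sum_lt_sum (fun i hi => (hwindow i (Finset.mem_range.1 hi)).2)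
      ⟨0, Finset.mem_range.2 (by omega), ?_⟩
    simp [hG, hf0, hnq.le]
  simp only [Finset.sum_add_distrib, Finset.sum_const, Finset.card_range, smul_eq_mul] at hlo hhi
  constructor <;> nlinarith

theorem eq_mul_div (hf : AlmostAdditiveOn f q)
    (hsym : ∀ a b, 0 < a → 0 < b → a + b = q → f a + f b + 1 = f q)
    {n : ℕ} (hnq : n ≤ q) : f n = n * f q / q := by
  rcases Nat.eq_zero_or_pos n with rfl | hn
  · simp [hf.map_zero]
  rcases hnq.lt_or_eq with hnq | rfl
  · have := hf.mul_lt_and_lt_mul_add hsym hn hnq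
    exact (Nat.div_eq_of_lt_le (by linarith) (by linarith)).symm
  · exact (Nat.mul_div_cancel_left _ hn).symm

theorem not_dvd_mul (hf : AlmostAdditiveOn f q)
    (hsym : ∀ a b, 0 < a → 0 < b → a + b = q → f a + f b + 1 = f q)
    {n : ℕ} (hn : 0 < n) (hnq : n < q) : ¬ q ∣ n * f q := by
  rintro ⟨c, hc⟩
  have := hf.mul_lt_and_lt_mul_add hsym hn hnq
  rw [hc] at this
  have h₁ := Nat.lt_of_mul_lt_mul_left this.1
  have h₂ : c < f n + 1 := Nat.lt_of_mul_lt_mul_left (by linarith : q * c < q * (f n + 1))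
  omega

end AlmostAdditiveOn

theorem Nat.coprime_of_forall_not_dvd_mul {p q : ℕ} (hq : 0 < q)
    (h : ∀ n, 0 < n → n < q → ¬ q ∣ n * p) : Nat.Coprime p q := by
  by_contra hpq
  obtain ⟨p', hp'⟩ := Nat.gcd_dvd_left p q
  obtain ⟨q', hq'⟩ := Nat.gcd_dvd_right p q
  have hd : 2 ≤ Nat.gcd p q := by
    have := Nat.gcd_pos_of_pos_right p hq
    unfold Nat.Coprime at hpq
    omega
  have hq'0 : 0 < q' := by
    rcases Nat.eq_zero_or_pos q' with rfl | h
    · omega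
    · exact h
  refine h q' hq'0 (by nlinarith) ⟨p', ?_⟩
  calc q' * p = q' * (Nat.gcd p q * p') := by rw [← hp']
    _ = Nat.gcd p q * q' * p' := by ring
    _ = q * p' := by rw [← hq']

theorem Nat.Coprime.pos_and_lt {p q : ℕ} (hco : Nat.Coprime p q) (hq : 2 ≤ q) (hpq : p ≤ q) :
    0 < p ∧ p < q := by
  refine ⟨Nat.pos_of_ne_zero ?_, lt_of_le_of_ne hpq ?_⟩ <;> rintro rfl
  · rw [Nat.coprime_zero_left] at hco
    omega
  · rw [Nat.coprime_self] at hco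
    omega

theorem Nat.Coprime.mul_mod_ne_zero {p q n : ℕ} (hco : Nat.Coprime p q) (hn : 0 < n)
    (hnq : n < q) : n * p % q ≠ 0 := fun h =>
  absurd (Nat.le_of_dvd hn (hco.symm.dvd_of_dvd_mul_right (Nat.dvd_of_mod_eq_zero h))) (by omega)

theorem Nat.add_one_mul_div {p q : ℕ} (n : ℕ) (hpq : p < q) :
    (n + 1) * p / q = n * p / q + if q - p ≤ n * p % q then 1 else 0 := by
  rw [add_one_mul, Nat.add_div (by omega), Nat.div_eq_of_lt hpq, Nat.mod_eq_of_lt hpq]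
  split_ifs <;> omega

theorem Nat.sub_one_mul_mod_self {p q : ℕ} (hp : 0 < p) (hpq : p ≤ q) :
    (q - 1) * p % q = q - p := by
  have : (q - 1) * p = q - p + q * (p - 1) := by
    zify [hp, hpq, (show 1 ≤ q by omega)]
    ring
  rw [this, Nat.add_mul_mod_self_left, Nat.mod_eq_of_lt (by omega)]

theorem Nat.add_eq_zero_or_eq_of_add_mod_eq_zero {a b q : ℕ} (ha : a < q) (hb : b < q)
    (h : (a + b) % q = 0) : a + b = 0 ∨ a + b = q := by
  obtain ⟨c, hc⟩ := Nat.dvd_of_mod_eq_zero h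
  have : c < 2 := by nlinarith
  interval_cases c <;> simp_all

theorem one_sub_div_eq_natCast_sub_div {p q : ℕ} (hq : 0 < q) (hpq : p ≤ q) :
    1 - (p : ℚ) / q = ((q - p : ℕ) : ℚ) / q := by
  rw [one_sub_div (by positivity), Nat.cast_sub hpq]

theorem lowerChrWord_eq_map {p q : ℕ} (hpq : p ≤ q) :
    lowerChrWord p q = (List.range q).map fun n => decide (q - p ≤ n * p % q) := by
  refine List.map_congr_left fun n hn => decide_eq_decide.2 ?_
  have hq : 0 < q := (Nat.zero_le n).trans_lt (List.mem_range.1 hn)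
  rw [Int.fract_div_natCast_eq_div_natCast_mod, one_sub_div_eq_natCast_sub_div hq hpq,
    div_le_div_iff_of_pos_right (by positivity), Nat.cast_le]

theorem upperChrWord_eq_map {p q : ℕ} (hpq : p ≤ q) :
    upperChrWord p q = (List.range q).map fun n => decide (n * p % q = 0 ∨ q - p < n * p % q) := by
  refine List.map_congr_left fun n hn => decide_eq_decide.2 ?_
  have hq : 0 < q := (Nat.zero_le n).trans_lt (List.mem_range.1 hn)
  rw [Int.fract_div_natCast_eq_div_natCast_mod, one_sub_div_eq_natCast_sub_div hq hpq,
    div_lt_div_iff_of_pos_right (by positivity), Nat.cast_lt, div_eq_zero_iff, Nat.cast_eq_zero,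
    Nat.cast_eq_zero, or_iff_left hq.ne']

theorem count_take_lowerChrWord {p q n : ℕ} (hpq : p < q) (hn : n ≤ q) :
    ((lowerChrWord p q).take n).count true = n * p / q := by
  rw [lowerChrWord_eq_map hpq.le, ← List.map_take, List.take_range, min_eq_left hn]
  induction n with
  | zero => simp
  | succ n ih =>
    rw [List.range_succ, List.map_append, List.count_append, ih (by omega),
      Nat.add_one_mul_div n hpq]
    simp [List.count_singleton]

theorem almostAdditiveOn_mul_div (p q N : ℕ) : AlmostAdditiveOn (fun k => k * p / q) N := by
  intro a b _
  rcases Nat.eq_zero_or_pos q with rfl | hq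
  · simp
  simp only [add_mul, Nat.add_div hq]
  split_ifs <;> omega

theorem balancedWord_lowerChrWord {p q : ℕ} (hpq : p < q) : BalancedWord (lowerChrWord p q) := by
  refine BalancedWord.of_almostAdditiveOn fun a b hab => ?_
  have hq : (lowerChrWord p q).length = q := by simp [lowerChrWord]
  simp only [hq] at hab ⊢
  simp only [count_take_lowerChrWord hpq (show a ≤ q by omega),
    count_take_lowerChrWord hpq (show b ≤ q by omega), count_take_lowerChrWord hpq hab]
  exact almostAdditiveOn_mul_div p q q a b hab

theorem List.range_eq_cons_range'_append {q : ℕ} (hq : 2 ≤ q) :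
    List.range q = 0 :: (List.range' 1 (q - 2) ++ [q - 1]) := by
  obtain ⟨k, rfl⟩ : ∃ k, q = k + 2 := ⟨q - 2, by omega⟩
  rw [List.range_succ, List.range_succ_eq_map, List.range'_eq_map_range]
  simp [add_comm]

def centralChrWord (p q : ℕ) : List Bool :=
  (List.range' 1 (q - 2)).map fun n => decide (q - p ≤ n * p % q)

theorem lowerChrWord_eq_cons_append {p q : ℕ} (hp : 0 < p) (hpq : p < q) :
    lowerChrWord p q = false :: (centralChrWord p q ++ [true]) := by
  rw [lowerChrWord_eq_map hpq.le, List.range_eq_cons_range'_append (by omega)]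
  simp [centralChrWord, Nat.sub_one_mul_mod_self hp hpq.le, hpq, Nat.sub_add_cancel hpq.le]

theorem upperChrWord_eq_cons_append {p q : ℕ} (hp : 0 < p) (hpq : p < q)
    (hco : Nat.Coprime p q) : upperChrWord p q = true :: (centralChrWord p q ++ [false]) := by
  rw [upperChrWord_eq_map hpq.le, List.range_eq_cons_range'_append (by omega)]
  simp only [List.map_cons, List.map_append, centralChrWord, Nat.sub_one_mul_mod_self hp hpq.le]
  have hmid : ∀ n ∈ List.range' 1 (q - 2), decide (n * p % q = 0 ∨ q - p < n * p % q) =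
      decide (q - p ≤ n * p % q) := by
    intro n hn
    rw [List.mem_range'_1] at hn
    have h₀ := hco.mul_mod_ne_zero (n := n) (by omega) (by omega)
    -- `n * p ≡ -p` would make `(n + 1) * p` divisible by `q`
    have h₁ := hco.mul_mod_ne_zero (n := n + 1) (by omega) (by omega)
    rw [add_one_mul, Nat.add_mod, Nat.mod_eq_of_lt hpq] at h₁
    refine decide_eq_decide.2 ⟨by omega, fun h => Or.inr (lt_of_le_of_ne h fun he => ?_)⟩
    rw [← he, Nat.sub_add_cancel hpq.le, Nat.mod_self] at h₁
    exact h₁ rfl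
  rw [List.map_congr_left hmid]
  simp [Nat.sub_ne_zero_of_lt hpq]

theorem upper_letter_eq_lower_letter_reflect {p q n : ℕ} (hp : 0 < p) (hpq : p < q) (hn : n < q) :
    decide (n * p % q = 0 ∨ q - p < n * p % q) = decide (q - p ≤ (q - 1 - n) * p % q) := by
  have hr : n * p % q < q := Nat.mod_lt _ (by omega)
  have hs : (n + 1) * p % q < q := Nat.mod_lt _ (by omega)
  have ht : (q - 1 - n) * p % q < q := Nat.mod_lt _ (by omega)
  have hsucc : (n + 1) * p % q = n * p % q + p ∨ (n + 1) * p % q + q = n * p % q + p := by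
    have : (n + 1) * p % q = (n * p % q + p) % q := by
      rw [add_one_mul, Nat.add_mod, Nat.mod_eq_of_lt hpq]
    rcases lt_or_ge (n * p % q + p) q with h | h
    · exact Or.inl (this.trans (Nat.mod_eq_of_lt h))
    · rw [this, Nat.mod_eq_sub_mod h, Nat.mod_eq_of_lt (by omega)]
      omega
  have hreflect : (q - 1 - n) * p % q + (n + 1) * p % q = 0 ∨
      (q - 1 - n) * p % q + (n + 1) * p % q = q := by
    refine Nat.add_eq_zero_or_eq_of_add_mod_eq_zero ht hs ?_
    rw [← Nat.add_mod, ← add_mul, show q - 1 - n + (n + 1) = q by omega, Nat.mul_mod_right]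
  refine decide_eq_decide.2 ?_
  generalize n * p % q = r at *
  generalize (n + 1) * p % q = s at *
  generalize (q - 1 - n) * p % q = t at *
  omega

theorem upperChrWord_eq_reverse_lowerChrWord {p q : ℕ} (hp : 0 < p) (hpq : p < q) :
    upperChrWord p q = (lowerChrWord p q).reverse := by
  rw [upperChrWord_eq_map hpq.le, lowerChrWord_eq_map hpq.le, ← List.map_reverse,
    List.range_eq_range', List.reverse_range', List.map_map, ← List.range_eq_range']
  refine List.map_congr_left fun n hn => ?_
  simpa using upper_letter_eq_lower_letter_reflect hp hpq (List.mem_range.1 hn)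

theorem centralChrWord_reverse {p q : ℕ} (hp : 0 < p) (hpq : p < q) (hco : Nat.Coprime p q) :
    (centralChrWord p q).reverse = centralChrWord p q := by
  have h := upperChrWord_eq_reverse_lowerChrWord hp hpq
  rw [upperChrWord_eq_cons_append hp hpq hco, lowerChrWord_eq_cons_append hp hpq] at h
  simpa using h.symm

theorem central_centralChrWord {p q : ℕ} (hp : 0 < p) (hpq : p < q) (hco : Nat.Coprime p q) :
    Central (centralChrWord p q) := by
  have hbal := balancedWord_lowerChrWord hpq
  rw [lowerChrWord_eq_cons_append hp hpq] at hbal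
  refine ⟨centralChrWord_reverse hp hpq hco, hbal, ?_⟩
  simpa [centralChrWord_reverse hp hpq hco] using hbal.reverse

theorem count_take_add_count_take_of_reverse_eq {u : List Bool} (hu : u.reverse = u)
    {a b : ℕ} (ha : 0 < a) (hb : 0 < b) (hab : a + b = (false :: (u ++ [true])).length) :
    ((false :: (u ++ [true])).take a).count true +
      ((false :: (u ++ [true])).take b).count true + 1 =
      (false :: (u ++ [true])).count true := by
  obtain ⟨a, rfl⟩ : ∃ a', a = a' + 1 := ⟨a - 1, by omega⟩
  obtain ⟨b, rfl⟩ : ∃ b', b = b' + 1 := ⟨b - 1, by omega⟩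
  simp only [List.length_cons, List.length_append, List.length_nil] at hab
  have htake : ∀ k ≤ u.length, ((false :: (u ++ [true])).take (k + 1)).count true =
      (u.take k).count true := by
    intro k hk
    simp [List.take_append_of_le_length hk]
  have hb' : u.take b = (u.drop a).reverse := by
    rw [List.reverse_drop, hu, show u.length - a = b by omega]
  rw [htake a (by omega), htake b (by omega), hb', List.count_reverse, ← List.count_append,
    List.take_append_drop]
  simp

theorem BalancedWord.eq_lowerChrWord {w : List Bool} (hw : BalancedWord w)
    (hsym : ∀ a b, 0 < a → 0 < b → a + b = w.length →
      (w.take a).count true + (w.take b).count true + 1 = w.count true)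
    (hlt : w.count true < w.length) :
    Nat.Coprime (w.count true) w.length ∧ w = lowerChrWord (w.count true) w.length := by
  have hf := hw.almostAdditiveOn hsym
  have hsym' : ∀ a b, 0 < a → 0 < b → a + b = w.length →
      (w.take a).count true + (w.take b).count true + 1 = (w.take w.length).count true := by
    rwa [List.take_length]
  constructor
  · refine Nat.coprime_of_forall_not_dvd_mul (by omega) fun n hn hnq => ?_
    simpa using hf.not_dvd_mul hsym' hn hnq
  · refine List.eq_of_count_true_take_eq (by simp [lowerChrWord]) fun n hn => ?_
    rw [count_take_lowerChrWord hlt hn]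
    simpa using hf.eq_mul_div hsym' hn

theorem eq_lowerChrWord_of_reverse_eq {u : List Bool} (hu : u.reverse = u)
    (hbal : BalancedWord (false :: (u ++ [true]))) :
    Nat.Coprime (u.count true + 1) (u.length + 2) ∧
      false :: (u ++ [true]) = lowerChrWord (u.count true + 1) (u.length + 2) := by
  have hlt : (false :: (u ++ [true])).count true < (false :: (u ++ [true])).length := by
    simpa using Nat.lt_succ_of_le (List.count_le_length (a := true) (l := u))
  simpa using hbal.eq_lowerChrWord
    (fun a b ha hb hab => count_take_add_count_take_of_reverse_eq hu ha hb hab) hlt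

theorem isLowerChristoffelMech_iff {v : List Bool} (hv : 2 ≤ v.length) :
    IsLowerChristoffelMech v ↔ ∃ u, Central u ∧ v = false :: (u ++ [true]) := by
  constructor
  · rintro ⟨p, q, -, hpq, hco, rfl⟩
    obtain ⟨hp, hpq⟩ := hco.pos_and_lt (by simpa [lowerChrWord] using hv) hpq
    exact ⟨centralChrWord p q, central_centralChrWord hp hpq hco,
      lowerChrWord_eq_cons_append hp hpq⟩
  · rintro ⟨u, ⟨hu, hbal, -⟩, rfl⟩
    obtain ⟨hco, heq⟩ := eq_lowerChrWord_of_reverse_eq hu hbal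
    have := List.count_le_length (a := true) (l := u)
    exact ⟨_, _, by omega, by omega, hco, heq⟩

theorem isUpperChristoffelMech_iff_reverse {v : List Bool} (hv : 2 ≤ v.length) :
    IsUpperChristoffelMech v ↔ IsLowerChristoffelMech v.reverse := by
  constructor
  · rintro ⟨p, q, hq, hpq, hco, rfl⟩
    obtain ⟨hp, hpq'⟩ := hco.pos_and_lt (by simpa [upperChrWord] using hv) hpq
    rw [upperChrWord_eq_reverse_lowerChrWord hp hpq', List.reverse_reverse]
    exact ⟨p, q, hq, hpq, hco, rfl⟩
  · rintro ⟨p, q, hq, hpq, hco, hrev⟩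
    have hlen : v.length = q := by simpa [lowerChrWord] using congrArg List.length hrev
    obtain ⟨hp, hpq'⟩ := hco.pos_and_lt (hlen ▸ hv) hpq
    refine ⟨p, q, hq, hpq, hco, ?_⟩
    rw [upperChrWord_eq_reverse_lowerChrWord hp hpq', ← hrev, List.reverse_reverse]

/-- A word of length at least 2 is a lower (resp. upper) Christoffel word iff it is `0u1`
(resp. `1u0`) for a central word `u`; consequently it is lower Christoffel iff its
reversal is upper Christoffel. -/
theorem christoffel_central_characterization (v : List Bool) (hv : 2 ≤ v.length) :
    (IsLowerChristoffelMech v ↔ ∃ u, Central u ∧ v = false :: (u ++ [true])) ∧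
    (IsUpperChristoffelMech v ↔ ∃ u, Central u ∧ v = true :: (u ++ [false])) ∧
    (IsLowerChristoffelMech v ↔ IsUpperChristoffelMech v.reverse) := by
  have hv' : 2 ≤ v.reverse.length := by simpa using hv
  refine ⟨isLowerChristoffelMech_iff hv, ?_, ?_⟩
  · rw [isUpperChristoffelMech_iff_reverse hv, isLowerChristoffelMech_iff hv']
    refine exists_congr fun u => and_congr_right fun hu => ?_
    rw [← List.reverse_inj, List.reverse_reverse]
    simp [hu.1]
  · rw [isUpperChristoffelMech_iff_reverse hv', List.reverse_reverse]
end

section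
/- If u, v, and uv are lower Christoffel words with {u,v} ≠ {0,1}, then either u is a prefix of v or v is a suffix of u. -/
/-- Lower Christoffel words: the letters `0`, `1` and the words `0u1` with `u` central. -/
def IsLowerChristoffel (v : List Bool) : Prop :=
  v = [false] ∨ v = [true] ∨ ∃ u, Central u ∧ v = false :: (u ++ [true])

/-- Upper Christoffel words: the letters `0`, `1` and the words `1u0` with `u` central. -/
def IsUpperChristoffel (v : List Bool) : Prop :=
  v = [false] ∨ v = [true] ∨ ∃ u, Central u ∧ v = true :: (u ++ [false])

/-- Christoffel words (lower or upper). -/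
def IsChristoffel (v : List Bool) : Prop := IsLowerChristoffel v ∨ IsUpperChristoffel v

/-!
Write `u = 0a1` and `v = 0b1` with `a`, `b` palindromes. Then `uv = 0c1` with `c = a10b`, and
since `c` is a palindrome too, `a10b = b01a`. Comparing the two sides of this equation, `a1` is
a prefix of `b` when `a` is shorter than `b`, `0b` is a suffix of `a` when `a` is longer, and the
lengths cannot be equal because `10 ≠ 01`.
-/

namespace List

variable {α : Type*}

theorem append_cons_cons_eq_of_reverse_eq {a b : List α} {x y : α}
    (ha : a.reverse = a) (hb : b.reverse = b)
    (hab : (a ++ x :: y :: b).reverse = a ++ x :: y :: b) :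
    a ++ x :: y :: b = b ++ y :: x :: a := by
  rw [← hab]
  simp [ha, hb]

theorem prefix_or_suffix_of_append_cons_cons_eq {a b : List α} {x y : α} (hxy : x ≠ y)
    (h : a ++ x :: y :: b = b ++ y :: x :: a) :
    a ++ [x] <+: b ∨ y :: b <:+ a := by
  rcases lt_trichotomy a.length b.length with hlt | heq | hgt
  · left
    have hax : a ++ [x] <+: a ++ x :: y :: b := ⟨y :: b, by simp⟩
    have hb : b <+: a ++ x :: y :: b := h ▸ prefix_append b _
    exact prefix_of_prefix_length_le hax hb (by simpa using hlt)
  · exact absurd (cons_eq_cons.mp (append_inj h heq).2).1 hxy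
  · right
    have hyb : y :: b <:+ a ++ x :: y :: b := ⟨a ++ [x], by simp⟩
    have ha : a <:+ a ++ x :: y :: b := h ▸ ⟨b ++ [y, x], by simp⟩
    exact suffix_of_suffix_length_le hyb ha (by simpa using hgt)

end List

theorem IsLowerChristoffel.exists_central_of_two_le_length {w : List Bool}
    (hw : IsLowerChristoffel w) (hlen : 2 ≤ w.length) :
    ∃ c, Central c ∧ w = false :: (c ++ [true]) := by
  rcases hw with rfl | rfl | hc
  · simp at hlen
  · simp at hlen
  · exact hc

theorem IsLowerChristoffel.length_pos {w : List Bool} (hw : IsLowerChristoffel w) :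
    0 < w.length := by
  rcases hw with rfl | rfl | ⟨c, -, rfl⟩ <;> simp

/-- If `u`, `v`, `uv` are lower Christoffel words with `{u,v} ≠ {0,1}`, then `u` is a
prefix of `v` or `v` is a suffix of `u`. -/
theorem christoffel_prefix_or_suffix (u v : List Bool)
    (hu : IsLowerChristoffel u) (hv : IsLowerChristoffel v)
    (huv : IsLowerChristoffel (u ++ v))
    (hne : ¬ (u = [false] ∧ v = [true])) :
    u <+: v ∨ v <:+ u := by
  have hlen : 2 ≤ (u ++ v).length := by
    simp only [List.length_append]
    have := hu.length_pos; have := hv.length_pos; omega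
  obtain ⟨c, hc, hcuv⟩ := huv.exists_central_of_two_le_length hlen
  rcases hu with rfl | rfl | ⟨a, ha, rfl⟩
  · rcases hv with rfl | rfl | ⟨b, -, rfl⟩
    · exact Or.inl List.prefix_rfl
    · exact absurd ⟨rfl, rfl⟩ hne
    · exact Or.inl ⟨b ++ [true], rfl⟩
  · simp at hcuv
  rcases hv with rfl | rfl | ⟨b, hb, rfl⟩
  · simpa using congrArg List.reverse hcuv
  · exact Or.inr ⟨[false] ++ a, rfl⟩
  have hc_eq : c = a ++ true :: false :: b := List.append_cancel_right (by simpa using hcuv.symm)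
  have hswap := List.append_cons_cons_eq_of_reverse_eq ha.1 hb.1 (hc_eq ▸ hc.1)
  rcases List.prefix_or_suffix_of_append_cons_cons_eq (by decide) hswap with hpre | hsuf
  · exact Or.inl (List.cons_prefix_cons.mpr ⟨rfl, hpre.trans (List.prefix_append b _)⟩)
  · exact Or.inr ((List.suffix_append_self_iff.mpr hsuf).trans (List.suffix_cons _ _))
end

section
/- Let w, w' be Abelian comparable Sturmian words with the same language, and let w = x₁x₂⋯, w' = x₁'x₂'⋯ be the factorizations where, for every k, x₁⋯x_k and x₁'⋯x_k' enumerate all pairs of Abelian equivalent prefixes. Then for each k, either x_k = x_k' is a single letter, or {x_k, x_k'} = {0u1, 1u0} for some central word u; in particular each x_k is a Christoffel word and x_k' is its reversal. -/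
/-!
Let `d n` be the number of `1`s in the prefix of length `n` of `w` minus that in `w'`; the cut
points of both factorizations are the zeros of `d`. Since Sturmian words are balanced and the
prefixes of `w'` are factors of `w`, `|d| ≤ 1`, so on a block of length at least `2` the difference
is a constant `±1`: `x k = c u c̄` and `x' k = c̄ u c`. Both are balanced factors of `w`, which
forces `u` to be a palindrome, hence central.

Balance of Sturmian words: an unbalanced factorial language contains `0t0` and `1t1` for a
palindrome `t`, which is then the unique right special factor of its length, and some `b t b̄` is
not a factor. By the palindrome property, after one occurrence of `t` followed by `b` every
occurrence of `t` is preceded, hence followed, by `b`; so from then on each window of length `|t|`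
determines the next letter and the word is eventually periodic, contradicting complexity `n + 1`.
-/

/-- The prefix of length `n` of an infinite binary word. -/
def pref (w : ℕ → Bool) (n : ℕ) : List Bool := (List.range n).map w

/-- `u` occurs as a factor of the infinite word `w`. -/
def FactorInf (u : List Bool) (w : ℕ → Bool) : Prop :=
  ∃ i, u = (List.range u.length).map (fun j => w (i + j))

/-- The language (set of factors) of an infinite word. -/
def Lang (w : ℕ → Bool) : Set (List Bool) := {u | FactorInf u w}

/-- An infinite binary word is Sturmian if it has exactly `n+1` factors of each length `n`. -/
def Sturmian (w : ℕ → Bool) : Prop :=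
  ∀ n, Set.ncard {u : List Bool | u.length = n ∧ FactorInf u w} = n + 1

/-- A finite word is a prefix of an infinite word. -/
def PrefixOf (u : List Bool) (w : ℕ → Bool) : Prop := u = pref w u.length

/-- Two finite binary words are Abelian equivalent if each letter occurs
the same number of times in both. -/
def AbelianEq (u v : List Bool) : Prop :=
  u.length = v.length ∧ u.count true = v.count true

/-- Two infinite words are Abelian comparable if they have arbitrarily long
Abelian equivalent prefixes. -/
def AbelianComparable (w w' : ℕ → Bool) : Prop :=
  ∀ n, ∃ m, n ≤ m ∧ AbelianEq (pref w m) (pref w' m)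

/-- The concatenation of the first `k` terms of a sequence of finite words. -/
def partConcat (x : ℕ → List Bool) (k : ℕ) : List Bool := (List.range k).flatMap x

/-- The sequence `x` of nonempty finite words is a factorization of the infinite word `w`,
i.e. `w = x₀x₁x₂⋯`. -/
def Factorizes (w : ℕ → Bool) (x : ℕ → List Bool) : Prop :=
  (∀ k, x k ≠ []) ∧ ∀ k, PrefixOf (partConcat x k) w

def window (w : ℕ → Bool) (i n : ℕ) : List Bool := (List.range n).map fun j => w (i + j)

section Window

variable (w : ℕ → Bool)

@[simp] theorem length_window (i n : ℕ) : (window w i n).length = n := by simp [window]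

theorem window_succ (i n : ℕ) : window w i (n + 1) = window w i n ++ [w (i + n)] := by
  simp [window, List.range_succ]

theorem window_succ_eq_cons (i n : ℕ) : window w i (n + 1) = w i :: window w (i + 1) n := by
  simp [window, List.range_succ_eq_map, Nat.add_assoc, Nat.add_comm 1]

theorem window_one (i : ℕ) : window w i 1 = [w i] := rfl

theorem window_add (i a b : ℕ) : window w i (a + b) = window w i a ++ window w (i + a) b := by
  simp [window, List.range_add, Nat.add_assoc]

theorem window_add_two (i n : ℕ) :
    window w i (n + 2) = w i :: (window w (i + 1) n ++ [w (i + 1 + n)]) := by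
  rw [window_succ_eq_cons, window_succ]

theorem getElem?_window (i n j : ℕ) :
    (window w i n)[j]? = if j < n then some (w (i + j)) else none := by
  by_cases hj : j < n <;> simp [window, hj]

theorem pref_eq_window (n : ℕ) : pref w n = window w 0 n := by simp [pref, window]

theorem window_mem_lang (i n : ℕ) : window w i n ∈ Lang w := ⟨i, by rw [length_window]; rfl⟩

theorem pref_mem_lang (n : ℕ) : pref w n ∈ Lang w := pref_eq_window w n ▸ window_mem_lang w 0 n

theorem mem_lang_of_infix {u v : List Bool} (h : u <:+: v) (hv : v ∈ Lang w) : u ∈ Lang w := by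
  obtain ⟨s, t, rfl⟩ := h
  obtain ⟨i, hi⟩ := hv
  change _ = window w i _ at hi
  rw [List.length_append, List.length_append, window_add, window_add] at hi
  exact ⟨i + s.length, List.append_inj_right (List.append_inj_left hi (by simp)) (by simp)⟩

theorem exists_append_mem_lang {u : List Bool} (hu : u ∈ Lang w) : ∃ a, u ++ [a] ∈ Lang w := by
  obtain ⟨i, hi⟩ := hu
  refine ⟨w (i + u.length), i, ?_⟩
  change _ = window w i _ at hi
  change _ = window w i _
  rw [List.length_append, List.length_singleton, window_succ, ← hi]

theorem window_succ_eq_of_window_eq {i j n : ℕ} (h : window w i n = window w j n)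
    (ha : w (i + n) = w (j + n)) : window w (i + 1) n = window w (j + 1) n := by
  have h' : window w i (n + 1) = window w j (n + 1) := by rw [window_succ, window_succ, h, ha]
  rw [window_succ_eq_cons, window_succ_eq_cons] at h'
  exact List.tail_eq_of_cons_eq h'

end Window

section Counting

open scoped Classical
open Finset

variable {w : ℕ → Bool}

noncomputable def factorsOfLength (w : ℕ → Bool) (n : ℕ) : Finset (List Bool) :=
  ((univ : Finset (List.Vector Bool n)).image List.Vector.toList).filter (· ∈ Lang w)

noncomputable def rightSpecials (w : ℕ → Bool) (n : ℕ) : Finset (List Bool) :=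
  (factorsOfLength w n).filter fun v => v ++ [false] ∈ Lang w ∧ v ++ [true] ∈ Lang w

theorem mem_factorsOfLength {n : ℕ} {u : List Bool} :
    u ∈ factorsOfLength w n ↔ u.length = n ∧ u ∈ Lang w := by
  simp only [factorsOfLength, mem_filter, mem_image, mem_univ, true_and]
  exact ⟨fun ⟨⟨v, hv⟩, hu⟩ => ⟨hv ▸ v.toList_length, hu⟩, fun ⟨hn, hu⟩ => ⟨⟨⟨u, hn⟩, rfl⟩, hu⟩⟩

theorem mem_rightSpecials {n : ℕ} {u : List Bool} :
    u ∈ rightSpecials w n ↔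
      u.length = n ∧ u ∈ Lang w ∧ u ++ [false] ∈ Lang w ∧ u ++ [true] ∈ Lang w := by
  simp [rightSpecials, mem_factorsOfLength, and_assoc]

/-- Each factor of length `n` has one or two right extensions, two exactly when it is right
special. -/
theorem card_factorsOfLength_succ (w : ℕ → Bool) (n : ℕ) :
    #(factorsOfLength w (n + 1)) = #(factorsOfLength w n) + #(rightSpecials w n) := by
  set F := factorsOfLength w n
  set A := F.filter (· ++ [false] ∈ Lang w)
  set B := F.filter (· ++ [true] ∈ Lang w)
  have hsplit : factorsOfLength w (n + 1) = A.image (· ++ [false]) ∪ B.image (· ++ [true]) := by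
    ext u
    simp only [mem_union, mem_image, mem_filter, A, B, F, mem_factorsOfLength]
    constructor
    · rintro ⟨hlen, hu⟩
      obtain ⟨v, a, rfl⟩ : ∃ v a, u = v ++ [a] := by
        rcases List.eq_nil_or_concat u with rfl | ⟨v, a, rfl⟩
        · simp at hlen
        · exact ⟨v, a, List.concat_eq_append ..⟩
      have hv : v.length = n ∧ v ∈ Lang w :=
        ⟨by simpa using hlen, mem_lang_of_infix w (List.prefix_append v [a]).isInfix hu⟩
      cases a
      · exact Or.inl ⟨v, ⟨hv, hu⟩, rfl⟩
      · exact Or.inr ⟨v, ⟨hv, hu⟩, rfl⟩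
    · rintro (⟨v, ⟨⟨hlen, -⟩, hv⟩, rfl⟩ | ⟨v, ⟨⟨hlen, -⟩, hv⟩, rfl⟩) <;> simpa [hlen] using hv
  have hdisj : Disjoint (A.image (· ++ [false])) (B.image (· ++ [true])) := by
    simp only [disjoint_left, mem_image]
    rintro _ ⟨v, -, rfl⟩ ⟨v', -, h⟩
    simpa using congrArg List.getLast? h
  have hunion : A ∪ B = F := by
    rw [← filter_or, filter_true_of_mem]
    intro v hv
    obtain ⟨a, ha⟩ := exists_append_mem_lang w (mem_factorsOfLength.mp hv).2
    cases a
    · exact Or.inl ha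
    · exact Or.inr ha
  have hinter : A ∩ B = rightSpecials w n := by rw [← filter_and]; rfl
  rw [hsplit, card_union_of_disjoint hdisj,
    card_image_of_injective _ (List.append_left_injective _),
    card_image_of_injective _ (List.append_left_injective _), ← card_union_add_card_inter, hunion,
    hinter]

theorem Sturmian.card_factorsOfLength (hw : Sturmian w) (n : ℕ) :
    #(factorsOfLength w n) = n + 1 := by
  rw [← hw n, ← Set.ncard_coe_finset]
  congr 1
  ext u
  simp [mem_factorsOfLength, Lang]

theorem Sturmian.eq_of_mem_rightSpecials (hw : Sturmian w) {n : ℕ} {u v : List Bool}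
    (hu : u ∈ rightSpecials w n) (hv : v ∈ rightSpecials w n) : u = v := by
  have h := card_factorsOfLength_succ w n
  rw [hw.card_factorsOfLength, hw.card_factorsOfLength] at h
  exact card_le_one.mp (by omega) u hu v hv

end Counting

section Periodicity

variable {w : ℕ → Bool}

def EventuallyPeriodic (w : ℕ → Bool) : Prop :=
  ∃ N p, 0 < p ∧ ∀ m, N ≤ m → w (m + p) = w m

theorem Sturmian.not_eventuallyPeriodic (hw : Sturmian w) : ¬ EventuallyPeriodic w := by
  rintro ⟨N, p, hp, hper⟩
  have hshift : ∀ k q j, N ≤ j → window w (j + p * q) k = window w j k := by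
    intro k q
    induction q with
    | zero => simp
    | succ q ih =>
      intro j hj
      rw [← ih j hj, Nat.mul_succ, ← Nat.add_assoc]
      exact List.map_congr_left fun i _ => by
        rw [Nat.add_right_comm _ p, hper _ (by omega)]
  have hsub : factorsOfLength w (N + p + 1) ⊆
      (Finset.range (N + p)).image fun i => window w i (N + p + 1) := by
    intro u hu
    obtain ⟨hlen, i, hi⟩ := mem_factorsOfLength.mp hu
    change u = window w i _ at hi
    rw [hlen] at hi
    rw [hi, Finset.mem_image]
    rcases Nat.lt_or_ge i N with hi | hi
    · exact ⟨i, by simp; omega, rfl⟩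
    · refine ⟨N + (i - N) % p, by simp [Nat.mod_lt _ hp], ?_⟩
      rw [← hshift _ ((i - N) / p) _ (by omega), Nat.add_assoc, Nat.mod_add_div,
        Nat.add_sub_cancel' hi]
  have := (Finset.card_le_card hsub).trans Finset.card_image_le
  rw [hw.card_factorsOfLength, Finset.card_range] at this
  omega

theorem eventuallyPeriodic_of_window_eq {M n i j : ℕ}
    (hdet : ∀ i j, M ≤ i → M ≤ j → window w i n = window w j n → w (i + n) = w (j + n))
    (hi : M ≤ i) (hij : i < j) (h : window w i n = window w j n) : EventuallyPeriodic w := by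
  have hshift : ∀ s, window w (i + s) n = window w (j + s) n := by
    intro s
    induction s with
    | zero => exact h
    | succ s ih =>
      exact window_succ_eq_of_window_eq w ih (hdet (i + s) (j + s) (by omega) (by omega) ih)
  refine ⟨i + n, j - i, by omega, fun m hm => ?_⟩
  have := hdet _ _ (by omega) (by omega) (hshift (m - n - i))
  rw [show i + (m - n - i) + n = m by omega,
    show j + (m - n - i) + n = m + (j - i) by omega] at this
  exact this.symm

/-- Finitely many windows of length `n`: if they determine the next letter, some window repeats
and the word is periodic from there on. -/
theorem eventuallyPeriodic_of_next_letter_det {M n : ℕ}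
    (hdet : ∀ i j, M ≤ i → M ≤ j → window w i n = window w j n → w (i + n) = w (j + n)) :
    EventuallyPeriodic w := by
  obtain ⟨r, r', hne, heq⟩ := Finite.exists_ne_map_eq_of_infinite (β := List.Vector Bool n)
    fun r => ⟨window w (M + r) n, length_window w _ n⟩
  have heq : window w (M + r) n = window w (M + r') n := congrArg List.Vector.toList heq
  rcases Nat.lt_or_gt_of_ne hne with h | h
  · exact eventuallyPeriodic_of_window_eq hdet (by omega) (by omega) heq
  · exact eventuallyPeriodic_of_window_eq hdet (by omega) (by omega) heq.symm

end Periodicity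

section ReturnWords

variable {w : ℕ → Bool} {n : ℕ}

theorem next_letter_eq_of_window_eq {i j : ℕ} (h : window w i n = window w j n)
    (hns : window w i n ∉ rightSpecials w n) : w (i + n) = w (j + n) := by
  by_contra hne
  have hi : window w i n ++ [w (i + n)] ∈ Lang w := window_succ w i n ▸ window_mem_lang w i (n + 1)
  have hj : window w i n ++ [w (j + n)] ∈ Lang w := by
    rw [h, ← window_succ]; exact window_mem_lang w j (n + 1)
  refine hns (mem_rightSpecials.mpr ⟨length_window w i n, window_mem_lang w i n, ?_⟩)
  cases hwi : w (i + n) <;> cases hwj : w (j + n) <;> simp_all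

theorem window_add_eq_of_forall_ne {t : List Bool} (ht : ∀ v ∈ rightSpecials w n, v = t)
    {i j s : ℕ} (h : window w i n = window w j n) (hs : ∀ r < s, window w (i + r) n ≠ t) :
    window w (i + s) n = window w (j + s) n := by
  induction s with
  | zero => exact h
  | succ s ih =>
    have ih := ih fun r hr => hs r (by omega)
    exact window_succ_eq_of_window_eq w ih
      (next_letter_eq_of_window_eq ih fun hrs => hs s (by omega) (ht _ hrs))

/-- Between two consecutive occurrences of the unique right special factor the word moves
deterministically, so the windows in between are pairwise distinct. -/
theorem Sturmian.occurrence_gap_le {t : List Bool} (hw : Sturmian w)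
    (ht : ∀ v ∈ rightSpecials w n, v = t)
    {j q : ℕ} (hj : window w j n = t) (hq : window w (j + q) n = t)
    (hgap : ∀ s, 0 < s → s < q → window w (j + s) n ≠ t) : q ≤ n + 1 := by
  have hdistinct : ∀ s s', s < s' → s' < q → window w (j + s) n ≠ window w (j + s') n := by
    intro s s' hss' hs'q heq
    rcases Nat.eq_zero_or_pos s with rfl | hs
    · exact hgap s' (by omega) hs'q (heq ▸ hj)
    have := window_add_eq_of_forall_ne ht heq (s := q - s') fun r hr => by
      rw [Nat.add_assoc]; exact hgap (s + r) (by omega) (by omega)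
    rw [Nat.add_assoc, Nat.add_assoc, Nat.add_sub_cancel' hs'q.le, hq] at this
    exact hgap (s + (q - s')) (by omega) (by omega) this
  have hinj : Set.InjOn (fun s => window w (j + s) n) (Finset.range q) := by
    intro s hs s' hs' heq
    simp only [Finset.coe_range, Set.mem_Iio] at hs hs'
    rcases Nat.lt_trichotomy s s' with h | h | h
    · exact absurd heq (hdistinct s s' h hs')
    · exact h
    · exact absurd heq.symm (hdistinct s' s h hs)
  have := Finset.card_le_card_of_injOn _
    (fun s _ => mem_factorsOfLength.mpr ⟨length_window w _ n, window_mem_lang w _ n⟩) hinj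
  rwa [Finset.card_range, hw.card_factorsOfLength] at this

/-- For `q ≤ n`, reflecting position `q - 1` through the palindrome gives position `n - q`, which in
the second occurrence is the letter after the first one. -/
theorem letter_before_eq_letter_after {j q : ℕ} (hpal : (window w j n).reverse = window w j n)
    (h : window w (j + q) n = window w j n) (hq0 : 0 < q) (hq : q ≤ n + 1) :
    w (j + q - 1) = w (j + n) := by
  rcases Nat.eq_or_lt_of_le hq with rfl | hq
  · rfl
  have e1 := congrArg (·[n - q]?) hpal
  have e2 := congrArg (·[n - q]?) h
  simp only [List.getElem?_reverse (show n - q < (window w j n).length by simp; omega),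
    length_window, getElem?_window] at e1 e2
  simp only [show n - 1 - (n - q) < n by omega, show n - q < n by omega, if_true,
    Option.some.injEq] at e1 e2
  rw [show j + q - 1 = j + (n - 1 - (n - q)) by omega, e1, ← e2,
    show j + q + (n - q) = j + n by omega]

theorem Sturmian.letter_after_occurrence_eq {t : List Bool} {b : Bool} {i₀ : ℕ} (hw : Sturmian w)
    (hpal : t.reverse = t) (ht : ∀ v ∈ rightSpecials w t.length, v = t)
    (hbad : b :: (t ++ [!b]) ∉ Lang w) (hi₀ : window w i₀ t.length = t)
    (hb : w (i₀ + t.length) = b) :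
    ∀ j, i₀ ≤ j → window w j t.length = t → w (j + t.length) = b := by
  set n := t.length
  intro j
  induction j using Nat.strong_induction_on with
  | _ j ih =>
  intro hij hj
  rcases Nat.eq_or_lt_of_le hij with rfl | hij
  · exact hb
  set P : ℕ → Prop := fun k => i₀ ≤ k ∧ window w k n = t
  set j' := Nat.findGreatest P (j - 1)
  have hj' : P j' := Nat.findGreatest_spec (m := i₀) (by omega) ⟨le_rfl, hi₀⟩
  have hj'j : j' < j := by have := Nat.findGreatest_le (P := P) (j - 1); omega
  have hgap : ∀ s, 0 < s → s < j - j' → window w (j' + s) n ≠ t := fun s hs hs' hocc =>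
    Nat.findGreatest_is_greatest (P := P) (n := j - 1) (k := j' + s) (by omega) (by omega)
      ⟨by omega, hocc⟩
  have hj_eq : window w (j' + (j - j')) n = t := by rwa [Nat.add_sub_cancel' hj'j.le]
  have hq := hw.occurrence_gap_le ht hj'.2 hj_eq hgap
  have hbefore : w (j - 1) = b := by
    rw [← ih j' hj'j hj'.1 hj'.2, ← letter_before_eq_letter_after (by rw [hj'.2, hpal])
      (hj_eq.trans hj'.2.symm) (by omega) hq, Nat.add_sub_cancel' hj'j.le]
  have hfac := window_add_two w (j - 1) n
  rw [Nat.sub_add_cancel (by omega), hj, hbefore] at hfac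
  by_contra hne
  rw [show w (j + n) = !b by cases b <;> simp_all] at hfac
  exact hbad (hfac ▸ window_mem_lang w (j - 1) (n + 2))

end ReturnWords

section Balance

theorem exists_eq_append_cons_of_ne :
    ∀ {s r : List Bool}, s.length = r.length → s ≠ r →
      ∃ z a s' r', s = z ++ a :: s' ∧ r = z ++ (!a) :: r'
  | [], [], _, hne => absurd rfl hne
  | a :: s, b :: r, hlen, hne => by
    by_cases hab : a = b
    · subst hab
      obtain ⟨z, c, s', r', rfl, rfl⟩ :=
        exists_eq_append_cons_of_ne (by simpa using hlen) fun h => hne (by rw [h])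
      exact ⟨a :: z, c, s', r', rfl, rfl⟩
    · exact ⟨[], a, s, r, rfl, by cases a <;> cases b <;> simp_all⟩

/-- The shape of a minimal unbalanced pair: `1s1` against `0s0` with `s` a palindrome; any
other `1s1`, `0r0` contains a shorter unbalanced pair. -/
theorem exists_shorter_unbalanced {s r : List Bool} (hlen : s.length = r.length)
    (hcount : r.count true ≤ s.count true) (hsr : ¬ (s = r ∧ s.reverse = s)) :
    ∃ X Y, X <:+: true :: (s ++ [true]) ∧ Y <:+: false :: (r ++ [false]) ∧
      X.length = Y.length ∧ X.length ≤ s.length + 1 ∧ Y.count true + 2 ≤ X.count true := by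
  by_cases hrs : s = r
  · subst hrs
    obtain ⟨z, c, s', r', hs, hr⟩ :=
      exists_eq_append_cons_of_ne (s := s) (r := s.reverse) (by simp) fun h => hsr ⟨rfl, h.symm⟩
    have hs' : s = r'.reverse ++ (!c) :: z.reverse := by simpa using congrArg List.reverse hr
    have hz : z.length + 1 ≤ s.length := by rw [hs]; simp
    cases c
    · refine ⟨true :: (z.reverse ++ [true]), false :: (z ++ [false]), ⟨true :: r'.reverse, [], ?_⟩,
        ⟨[], s' ++ [false], ?_⟩, by simp, by simp; omega, by simp⟩
      · conv_rhs => rw [hs']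
        simp
      · conv_rhs => rw [hs]
        simp
    · refine ⟨true :: (z ++ [true]), false :: (z.reverse ++ [false]), ⟨[], s' ++ [true], ?_⟩,
        ⟨false :: r'.reverse, [], ?_⟩, by simp, by simp; omega, by simp⟩
      · conv_rhs => rw [hs]
        simp
      · conv_rhs => rw [hs']
        simp
  · obtain ⟨z, c, s', r', rfl, rfl⟩ := exists_eq_append_cons_of_ne hlen hrs
    simp only [List.length_append, List.length_cons] at hlen
    cases c
    · simp [List.count_append] at hcount
      refine ⟨s' ++ [true], r' ++ [false], ⟨true :: (z ++ [false]), [], by simp⟩,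
        ⟨false :: (z ++ [true]), [], by simp⟩, by simp; omega, by simp; omega, by simp; omega⟩
    · refine ⟨true :: (z ++ [true]), false :: (z ++ [false]), ⟨[], s' ++ [true], by simp⟩,
        ⟨[], r' ++ [false], by simp⟩, by simp, by simp, by simp⟩

theorem exists_cons_append_singleton {u : List Bool} (hu : 2 ≤ u.length) :
    ∃ a s c, u = a :: (s ++ [c]) := by
  obtain _ | ⟨a, u⟩ := u
  · simp at hu
  obtain ⟨s, c, rfl⟩ : ∃ s c, u = s ++ [c] := by
    rcases List.eq_nil_or_concat u with rfl | ⟨s, c, rfl⟩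
    · simp at hu
    · exact ⟨s, c, List.concat_eq_append ..⟩
  exact ⟨a, s, c, rfl⟩

theorem exists_palindrome_of_unbalanced {L : Set (List Bool)}
    (hL : ∀ ⦃u v⦄, u <:+: v → v ∈ L → u ∈ L) :
    ∀ {u v : List Bool}, u ∈ L → v ∈ L → u.length = v.length → v.count true + 2 ≤ u.count true →
      ∃ t, t.reverse = t ∧ false :: (t ++ [false]) ∈ L ∧ true :: (t ++ [true]) ∈ L := by
  intro u
  induction' hN : u.length using Nat.strong_induction_on with N ih generalizing u
  intro v hu hv hlen hcount
  have IH : ∀ X Y, X <:+: u → Y <:+: v → X.length = Y.length → X.length < N →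
      Y.count true + 2 ≤ X.count true →
      ∃ t, t.reverse = t ∧ false :: (t ++ [false]) ∈ L ∧ true :: (t ++ [true]) ∈ L :=
    fun X Y hX hY hXY hXN hc => ih _ hXN rfl (hL hX hu) (hL hY hv) hXY hc
  have h2 : 2 ≤ N := hN ▸ (Nat.le_add_left _ _).trans (hcount.trans List.count_le_length)
  obtain ⟨a, s, c, rfl⟩ := exists_cons_append_singleton (hN ▸ h2)
  obtain ⟨a', r, c', rfl⟩ := exists_cons_append_singleton (hlen ▸ h2)
  simp only [List.length_cons, List.length_append] at hN hlen
  by_cases ha : a = true ∧ a' = false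
  swap
  · refine IH (s ++ [c]) (r ++ [c']) ⟨[a], [], by simp⟩ ⟨[a'], [], by simp⟩ (by simp; omega)
      (by simp; omega) ?_
    cases a <;> cases a' <;> simp_all
    omega
  by_cases hc : c = true ∧ c' = false
  swap
  · refine IH (a :: s) (a' :: r) ⟨[], [c], by simp⟩ ⟨[], [c'], by simp⟩ (by simp; omega)
      (by simp; omega) ?_
    cases c <;> cases c' <;> simp_all
    omega
  obtain ⟨rfl, rfl⟩ := ha
  obtain ⟨rfl, rfl⟩ := hc
  simp only [List.count_cons, List.count_append] at hcount
  by_cases hsr : s = r ∧ s.reverse = s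
  · obtain ⟨rfl, hpal⟩ := hsr
    exact ⟨s, hpal, hv, hu⟩
  obtain ⟨X, Y, hX, hY, hXY, hXs, hc⟩ :=
    exists_shorter_unbalanced (by omega) (by simp at hcount; omega) hsr
  exact IH X Y hX hY hXY (by omega) hc

def BalancedLang (L : Set (List Bool)) : Prop :=
  ∀ u ∈ L, ∀ v ∈ L, u.length = v.length → u.count true ≤ v.count true + 1

variable {w : ℕ → Bool}

/-- `0t` and `1t` cannot both be right special, so one of `0t1`, `1t0` is missing. -/
theorem Sturmian.exists_forbidden_extension (hw : Sturmian w) {t : List Bool}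
    (h0 : false :: (t ++ [false]) ∈ Lang w) (h1 : true :: (t ++ [true]) ∈ Lang w) :
    ∃ b : Bool, b :: (t ++ [b]) ∈ Lang w ∧ b :: (t ++ [!b]) ∉ Lang w := by
  by_contra! h
  have hspecial : ∀ b : Bool, b :: t ∈ rightSpecials w (t.length + 1) := by
    intro b
    have hbb : b :: (t ++ [b]) ∈ Lang w := by cases b <;> assumption
    have hbnb := h b hbb
    refine mem_rightSpecials.mpr ⟨by simp, mem_lang_of_infix w ⟨[], [b], by simp⟩ hbb, ?_⟩
    cases b
    · exact ⟨by simpa using hbb, by simpa using hbnb⟩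
    · exact ⟨by simpa using hbnb, by simpa using hbb⟩
  simpa using hw.eq_of_mem_rightSpecials (hspecial false) (hspecial true)

theorem Sturmian.balancedLang (hw : Sturmian w) : BalancedLang (Lang w) := by
  intro u hu v hv hlen
  by_contra! hcount
  obtain ⟨t, hpal, h0, h1⟩ :=
    exists_palindrome_of_unbalanced (fun _ _ h hv => mem_lang_of_infix w h hv) hu hv hlen (by omega)
  obtain ⟨b, ⟨i, hi⟩, hbad⟩ := hw.exists_forbidden_extension h0 h1
  set n := t.length
  change _ = window w i _ at hi
  rw [show (b :: (t ++ [b])).length = n + 2 by simp [n], window_add_two] at hi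
  obtain ⟨hti, hbi⟩ := List.append_inj' (List.cons.inj hi).2 (by simp)
  have ht : ∀ v ∈ rightSpecials w n, v = t := fun v hv =>
    hw.eq_of_mem_rightSpecials hv (mem_rightSpecials.mpr ⟨rfl,
      mem_lang_of_infix w ⟨[false], [false], by simp⟩ h0,
      mem_lang_of_infix w ⟨[false], [], by simp⟩ h0, mem_lang_of_infix w ⟨[true], [], by simp⟩ h1⟩)
  have hocc := hw.letter_after_occurrence_eq hpal ht hbad hti.symm (by simpa using hbi.symm)
  apply hw.not_eventuallyPeriodic
  refine eventuallyPeriodic_of_next_letter_det (M := i + 1) (n := n) fun j j' hj hj' heq => ?_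
  by_cases hjt : window w j n = t
  · rw [hocc j hj hjt, hocc j' hj' (heq ▸ hjt)]
  · exact next_letter_eq_of_window_eq heq fun h => hjt (ht _ h)


theorem BalancedLang.balancedWord (hbal : BalancedLang (Lang w)) {v : List Bool}
    (hv : v ∈ Lang w) : BalancedWord v := fun _ _ hx hy =>
  hbal _ (mem_lang_of_infix w hx hv) _ (mem_lang_of_infix w hy hv)

/-- At the first position where `u` and its reversal differ, one of `0u1`, `1u0` has the
factors `0z0` and `1zᴿ1` (or `1z1` and `0zᴿ0`). -/
theorem reverse_eq_of_balancedWord {u : List Bool} (h0 : BalancedWord (false :: (u ++ [true])))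
    (h1 : BalancedWord (true :: (u ++ [false]))) : u.reverse = u := by
  by_contra hne
  obtain ⟨z, c, s, r, hu, hr⟩ := exists_eq_append_cons_of_ne (s := u) (r := u.reverse) (by simp)
    fun h => hne h.symm
  have hu' : u = r.reverse ++ (!c) :: z.reverse := by simpa using congrArg List.reverse hr
  cases c
  · have := h0 (true :: (z.reverse ++ [true])) (false :: (z ++ [false]))
      ⟨false :: r.reverse, [], by rw [hu']; simp⟩
      ⟨[], s ++ [true], by rw [hu]; simp⟩ (by simp)
    simp at this
  · have := h1 (true :: (z ++ [true])) (false :: (z.reverse ++ [false]))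
      ⟨[], s ++ [false], by rw [hu]; simp⟩
      ⟨true :: r.reverse, [], by rw [hu']; simp⟩ (by simp)
    simp at this

theorem BalancedLang.central (hbal : BalancedLang (Lang w)) {u : List Bool} {c : Bool}
    (h : c :: (u ++ [!c]) ∈ Lang w) (h' : (!c) :: (u ++ [c]) ∈ Lang w) : Central u := by
  obtain ⟨h0, h1⟩ : false :: (u ++ [true]) ∈ Lang w ∧ true :: (u ++ [false]) ∈ Lang w := by
    cases c
    exacts [⟨h, h'⟩, ⟨h', h⟩]
  have hb0 := hbal.balancedWord h0
  have hb1 := hbal.balancedWord h1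
  exact ⟨reverse_eq_of_balancedWord hb0 hb1, hb0, hb1⟩

end Balance

section CountDiff

variable {v v' : ℕ → Bool}

def countDiff (v v' : ℕ → Bool) (n : ℕ) : ℤ := (pref v n).count true - (pref v' n).count true

@[simp] theorem countDiff_zero : countDiff v v' 0 = 0 := by simp [countDiff, pref]

theorem countDiff_succ (n : ℕ) :
    countDiff v v' (n + 1) = countDiff v v' n + (v n).toNat - (v' n).toNat := by
  simp only [countDiff, pref, List.range_succ, List.map_append, List.map_cons, List.map_nil,
    List.count_append, List.count_singleton]
  cases v n <;> cases v' n <;> simp <;> ring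

theorem abelianEq_pref_iff (n : ℕ) : AbelianEq (pref v n) (pref v' n) ↔ countDiff v v' n = 0 := by
  simp [AbelianEq, pref, countDiff, sub_eq_zero]

theorem BalancedLang.abs_countDiff_le_one {L : Set (List Bool)} (hbal : BalancedLang L) {n : ℕ}
    (h : pref v n ∈ L) (h' : pref v' n ∈ L) : |countDiff v v' n| ≤ 1 := by
  have hl : (pref v n).length = (pref v' n).length := by simp [pref]
  have := hbal _ h _ h' hl
  have := hbal _ h' _ h hl.symm
  rw [abs_le, countDiff]
  omega

theorem countDiff_succ_eq_of_ne_zero (hb : ∀ n, |countDiff v v' n| ≤ 1) {n : ℕ}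
    (h : countDiff v v' n ≠ 0)
    (h' : countDiff v v' (n + 1) ≠ 0) : countDiff v v' (n + 1) = countDiff v v' n := by
  have := abs_le.mp (hb n)
  have := abs_le.mp (hb (n + 1))
  have := countDiff_succ (v := v) (v' := v') n
  have := Bool.toNat_le (v n)
  have := Bool.toNat_le (v' n)
  omega

theorem eq_of_countDiff_succ {n : ℕ} (h : countDiff v v' n = 0) (h' : countDiff v v' (n + 1) = 0) :
    v n = v' n := by
  rw [countDiff_succ, h, zero_add] at h'
  revert h'
  cases v n <;> cases v' n <;> simp

/-- Strictly between two consecutive zeros, `countDiff` is a constant `±1`. -/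
theorem window_eq_of_countDiff (hb : ∀ n, |countDiff v v' n| ≤ 1) {A L : ℕ} (hL : 2 ≤ L)
    (hA : countDiff v v' A = 0) (hAL : countDiff v v' (A + L) = 0)
    (hne : ∀ n, A < n → n < A + L → countDiff v v' n ≠ 0) :
    window v A L = v A :: (window v (A + 1) (L - 2) ++ [!v A]) ∧
      window v' A L = (!v A) :: (window v (A + 1) (L - 2) ++ [v A]) := by
  obtain ⟨m, rfl⟩ : ∃ m, L = m + 2 := ⟨L - 2, by omega⟩
  have hconst : ∀ s ≤ m, countDiff v v' (A + 1 + s) = countDiff v v' (A + 1) := by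
    intro s hs
    induction s with
    | zero => rfl
    | succ s ih =>
      rw [← Nat.add_assoc, countDiff_succ_eq_of_ne_zero hb (hne _ (by omega) (by omega))
        (hne _ (by omega) (by omega)), ih (by omega)]
  have hfirst := countDiff_succ (v := v) (v' := v') A
  have hfirst_ne := hne (A + 1) (by omega) (by omega)
  have hlast := countDiff_succ (v := v) (v' := v') (A + 1 + m)
  rw [show A + 1 + m + 1 = A + (m + 2) by omega, hAL, hconst m le_rfl] at hlast
  rw [hA, zero_add] at hfirst
  have hfirst' : v' A = !v A := by
    rw [hfirst] at hfirst_ne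
    revert hfirst_ne
    cases v A <;> cases v' A <;> simp
  have hmid : window v' (A + 1) m = window v (A + 1) m := List.map_congr_left fun s hs => by
    have hs := List.mem_range.mp hs
    have := countDiff_succ (v := v) (v' := v') (A + 1 + s)
    rw [hconst s hs.le, Nat.add_assoc, hconst (s + 1) hs] at this
    revert this
    cases v (A + 1 + s) <;> cases v' (A + 1 + s) <;> simp
    omega
  rw [hfirst, hfirst'] at hlast
  rw [window_add_two, window_add_two, hmid, Nat.add_sub_cancel, hfirst']
  revert hlast
  cases v A <;> cases v (A + 1 + m) <;> cases v' (A + 1 + m) <;> simp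

end CountDiff

section Factorization

variable {w : ℕ → Bool} {x : ℕ → List Bool}

theorem partConcat_succ (x : ℕ → List Bool) (k : ℕ) :
    partConcat x (k + 1) = partConcat x k ++ x k := by
  simp [partConcat, List.range_succ]

theorem length_partConcat_succ (x : ℕ → List Bool) (k : ℕ) :
    (partConcat x (k + 1)).length = (partConcat x k).length + (x k).length := by
  simp [partConcat_succ]

theorem pref_add (w : ℕ → Bool) (a b : ℕ) : pref w (a + b) = pref w a ++ window w a b := by
  rw [pref_eq_window, pref_eq_window, window_add, Nat.zero_add]

theorem Factorizes.eq_window (hf : Factorizes w x) (k : ℕ) :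
    x k = window w (partConcat x k).length (x k).length := by
  have h := hf.2 (k + 1)
  rw [PrefixOf, length_partConcat_succ, pref_add, ← hf.2 k, partConcat_succ] at h
  exact List.append_cancel_left h

theorem Factorizes.strictMono (hf : Factorizes w x) :
    StrictMono fun k => (partConcat x k).length :=
  strictMono_nat_of_lt_succ fun k => by
    rw [length_partConcat_succ]
    exact Nat.lt_add_of_pos_right (List.length_pos_iff.mpr (hf.1 k))

theorem Factorizes.ne_zero_of_lt_of_lt (hf : Factorizes w x) {d : ℕ → ℤ}
    (hzero : ∀ n, d n = 0 ↔ ∃ j, n = (partConcat x j).length) {k n : ℕ}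
    (h : (partConcat x k).length < n) (h' : n < (partConcat x (k + 1)).length) : d n ≠ 0 := by
  intro hn
  obtain ⟨j, rfl⟩ := (hzero n).mp hn
  have := hf.strictMono.lt_iff_lt.mp h
  have := hf.strictMono.lt_iff_lt.mp h'
  omega

theorem Factorizes.eq_window_of_length_eq {w' : ℕ → Bool} {x' : ℕ → List Bool}
    (hf' : Factorizes w' x') (hlen : ∀ k, (partConcat x k).length = (partConcat x' k).length)
    (k : ℕ) : x' k = window w' (partConcat x k).length (x k).length := by
  have h := hlen (k + 1)
  rw [length_partConcat_succ, length_partConcat_succ, hlen k, Nat.add_left_cancel_iff] at h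
  rw [hf'.eq_window k, hlen k, h]

end Factorization

def ChristoffelPair (a a' : List Bool) : Prop :=
  a' = a.reverse ∧
    ((a = a' ∧ ∃ c : Bool, a = [c]) ∨
      ∃ u, Central u ∧
        ((a = false :: (u ++ [true]) ∧ a' = true :: (u ++ [false])) ∨
          (a = true :: (u ++ [false]) ∧ a' = false :: (u ++ [true]))))

theorem christoffelPair_single (c : Bool) : ChristoffelPair [c] [c] :=
  ⟨rfl, Or.inl ⟨rfl, c, rfl⟩⟩

theorem christoffelPair_sandwich {u : List Bool} (hu : Central u) (c : Bool) :
    ChristoffelPair (c :: (u ++ [!c])) ((!c) :: (u ++ [c])) := by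
  refine ⟨by simp [hu.1], Or.inr ⟨u, hu, ?_⟩⟩
  cases c <;> simp

theorem abelian_comparison_terms_general (w w' : ℕ → Bool) (x x' : ℕ → List Bool)
    (hw : Sturmian w) (hl : Lang w = Lang w')
    (hfx : Factorizes w x) (hfx' : Factorizes w' x')
    (hlen : ∀ k, (partConcat x k).length = (partConcat x' k).length)
    (henum : ∀ n, 0 < n →
      (AbelianEq (pref w n) (pref w' n) ↔ ∃ k, n = (partConcat x k).length)) :
    ∀ k, x' k = (x k).reverse ∧
      ((x k = x' k ∧ ∃ a : Bool, x k = [a]) ∨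
        ∃ u, Central u ∧
          ((x k = false :: (u ++ [true]) ∧ x' k = true :: (u ++ [false])) ∨
           (x k = true :: (u ++ [false]) ∧ x' k = false :: (u ++ [true])))) := by
  intro k
  have hbal := hw.balancedLang
  have hbound : ∀ n, |countDiff w w' n| ≤ 1 := fun n =>
    hbal.abs_countDiff_le_one (pref_mem_lang w n) (hl ▸ pref_mem_lang w' n)
  have hzero : ∀ n, countDiff w w' n = 0 ↔ ∃ j, n = (partConcat x j).length := by
    rintro (_ | n)
    · exact ⟨fun _ => ⟨0, rfl⟩, fun _ => countDiff_zero⟩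
    · rw [← abelianEq_pref_iff, henum _ n.succ_pos]
  have hA := (hzero _).mpr ⟨k, rfl⟩
  have hAL := (hzero _).mpr ⟨k + 1, (length_partConcat_succ x k).symm⟩
  have hne : ∀ n, (partConcat x k).length < n → n < (partConcat x k).length + (x k).length →
      countDiff w w' n ≠ 0 := fun n h h' =>
    hfx.ne_zero_of_lt_of_lt hzero h (length_partConcat_succ x k ▸ h')
  rw [hfx.eq_window k, hfx'.eq_window_of_length_eq hlen k]
  rcases Nat.lt_or_ge (x k).length 2 with hL | hL
  · obtain hL1 : (x k).length = 1 := by have := List.length_pos_iff.mpr (hfx.1 k); omega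
    rw [hL1, window_one, window_one, ← eq_of_countDiff_succ hA (hL1 ▸ hAL)]
    exact christoffelPair_single _
  · obtain ⟨h, h'⟩ := window_eq_of_countDiff hbound hL hA hAL hne
    have hu := hbal.central (h ▸ window_mem_lang w _ _) (hl ▸ h' ▸ window_mem_lang w' _ _)
    rw [h, h']
    exact christoffelPair_sandwich hu _

/-- In the Abelian comparison of two Sturmian words with the same language, each pair of
corresponding terms is either a common single letter or `{0u1, 1u0}` for a central word
`u`; in particular each term is a Christoffel word and the corresponding term of the
other factorization is its reversal. -/
theorem abelian_comparison_terms (w w' : ℕ → Bool) (x x' : ℕ → List Bool)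
    (hw : Sturmian w) (hw' : Sturmian w') (hl : Lang w = Lang w')
    (hab : AbelianComparable w w')
    (hfx : Factorizes w x) (hfx' : Factorizes w' x')
    (hlen : ∀ k, (partConcat x k).length = (partConcat x' k).length)
    (henum : ∀ n, 0 < n →
      (AbelianEq (pref w n) (pref w' n) ↔ ∃ k, n = (partConcat x k).length)) :
    ∀ k, x' k = (x k).reverse ∧
      ((x k = x' k ∧ ∃ a : Bool, x k = [a]) ∨
        ∃ u, Central u ∧
          ((x k = false :: (u ++ [true]) ∧ x' k = true :: (u ++ [false])) ∨
           (x k = true :: (u ++ [false]) ∧ x' k = false :: (u ++ [true])))) :=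
  abelian_comparison_terms_general w w' x x' hw hl hfx hfx' hlen henum
end
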